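/- arXiv:2603.09598 — 7 statements merged into one kernel-verified Lean document; each statement's English description precedes it below -/
import Mathlib

section
/- Let P = ℙ(ℝ²) be the real projective line and A = {(x, y) ∈ P × P : x ≠ y} with the subspace topology. Let Φ : A → A be a homeomorphism such that: (i) for all (x,y), (x,y') ∈ A, the first coordinates of Φ(x,y) and Φ(x,y') agree; (ii) for all (x,y), (x',y) ∈ A, the second coordinates of Φ(x,y) and Φ(x',y) agree; and (iii), (iv): the same two properties hold for Φ⁻¹. Then there exists a homeomorphism φ : P → P such that Φ(x, y) = (φ(x), φ(y)) for all (x,y) ∈ A. -/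
noncomputable instance : TopologicalSpace (Projectivization ℝ (Fin 2 → ℝ)) :=
  inferInstanceAs (TopologicalSpace (Quotient (projectivizationSetoid ℝ (Fin 2 → ℝ))))

/-- The split annulus: pairs of distinct points of the real projective line. -/
abbrev SplitAnnulus : Type :=
  {p : (Projectivization ℝ (Fin 2 → ℝ)) × (Projectivization ℝ (Fin 2 → ℝ)) // p.1 ≠ p.2}

/-!
A split map has the form `Φ (x, y) = (f x, g y)`. Since `Φ` is onto the complement of the
diagonal, `f` is onto; since `f x ≠ g y` whenever `x ≠ y`, this forces `g = f`, and then
`f x ≠ f y` for `x ≠ y` makes `f` injective. The inverse of `f` is the first-coordinate map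
of `Φ⁻¹`. Both are continuous because near any `x` they agree with `z ↦ Φ (z, c)` for a fixed
`c ≠ x`, and `{z | z ≠ c}` is open since the projective line is T1.
-/

open scoped LinearAlgebra.Projectivization

namespace Projectivization

theorem mk_eq_iff_mem_span {K V : Type*} [DivisionRing K] [AddCommGroup V] [Module K V]
    (c : ℙ K V) (v : V) (hv : v ≠ 0) : mk K v hv = c ↔ v ∈ K ∙ c.rep := by
  rw [Submodule.mem_span_singleton, ← mk_eq_mk_iff' K v c.rep hv c.rep_nonzero, mk_rep]

theorem isClosed_setOf_mk_eq {𝕜 V : Type*} [NontriviallyNormedField 𝕜] [CompleteSpace 𝕜]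
    [NormedAddCommGroup V] [NormedSpace 𝕜 V] [FiniteDimensional 𝕜 V] (c : ℙ 𝕜 V) :
    IsClosed {v : {v : V // v ≠ 0} | mk 𝕜 v.1 v.2 = c} := by
  simp only [mk_eq_iff_mem_span]
  exact (Submodule.closed_of_finiteDimensional _).preimage continuous_subtype_val

instance {K ι : Type*} [DivisionRing K] [Nontrivial ι] [DecidableEq ι] :
    Nontrivial (ℙ K (ι → K)) := by
  obtain ⟨i, j, hij⟩ := exists_pair_ne ι
  refine ⟨mk K (Pi.single i 1) (by simp), mk K (Pi.single j 1) (by simp), fun h => ?_⟩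
  obtain ⟨a, ha⟩ := (mk_eq_mk_iff' K _ _ _ _).1 h
  simpa [hij] using congrFun ha i

end Projectivization

instance : T1Space (ℙ ℝ (Fin 2 → ℝ)) :=
  ⟨fun c => isClosed_coinduced.mpr (Projectivization.isClosed_setOf_mk_eq c)⟩

abbrev OffDiagonal (X : Type*) : Type _ := {p : X × X // p.1 ≠ p.2}

namespace OffDiagonal

variable {X Y : Type*}

theorem exists_eq_comp_fst [Nontrivial X] (g : OffDiagonal X → Y)
    (hg : ∀ p q : OffDiagonal X, p.1.1 = q.1.1 → g p = g q) :
    ∃ f : X → Y, ∀ p, g p = f p.1.1 := by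
  choose c hc using exists_ne (α := X)
  exact ⟨fun x => g ⟨(x, c x), (hc x).symm⟩, fun p => hg _ _ rfl⟩

theorem exists_eq_comp_snd [Nontrivial X] (g : OffDiagonal X → Y)
    (hg : ∀ p q : OffDiagonal X, p.1.2 = q.1.2 → g p = g q) :
    ∃ f : X → Y, ∀ p, g p = f p.1.2 := by
  choose c hc using exists_ne (α := X)
  exact ⟨fun y => g ⟨(c y, y), hc y⟩, fun p => hg _ _ rfl⟩

theorem continuous_of_eq_comp_fst [TopologicalSpace X] [T1Space X] [Nontrivial X]
    [TopologicalSpace Y] {g : OffDiagonal X → Y} {f : X → Y} (hg : Continuous g)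
    (hf : ∀ p, g p = f p.1.1) : Continuous f := by
  refine continuous_iff_continuousAt.2 fun x => ?_
  obtain ⟨c, hc⟩ := exists_ne x
  have hfc : ContinuousOn f {z | z ≠ c} := by
    rw [continuousOn_iff_continuous_domRestrict]
    have hfg : {z | z ≠ c}.domRestrict f = fun z : {z // z ≠ c} => g ⟨(z.1, c), z.2⟩ :=
      funext fun z => (hf ⟨(z.1, c), z.2⟩).symm
    rw [hfg]
    exact hg.comp ((continuous_subtype_val.prodMk continuous_const).subtype_mk _)
  exact hfc.continuousAt (isOpen_ne.mem_nhds hc.symm)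

section Split

variable {Φ : OffDiagonal X → OffDiagonal X} {f g : X → X}

theorem surjective_fst_of_surjective [Nontrivial X] (hΦ : Φ.Surjective)
    (hfg : ∀ p, (Φ p).1 = (f p.1.1, g p.1.2)) : f.Surjective := by
  intro a
  obtain ⟨b, hb⟩ := exists_ne a
  obtain ⟨p, hp⟩ := hΦ ⟨(a, b), hb.symm⟩
  exact ⟨p.1.1, (Prod.ext_iff.1 (hp ▸ hfg p)).1.symm⟩

theorem snd_eq_fst_of_surjective [Nontrivial X] (hΦ : Φ.Surjective)
    (hfg : ∀ p, (Φ p).1 = (f p.1.1, g p.1.2)) : g = f := by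
  funext y
  obtain ⟨x, hx⟩ := surjective_fst_of_surjective hΦ hfg (g y)
  by_contra hne
  have hxy : x ≠ y := by
    rintro rfl
    exact hne hx.symm
  have hΦxy := (Φ ⟨(x, y), hxy⟩).2
  rw [hfg] at hΦxy
  exact hΦxy hx

theorem injective_of_forall_val_eq (hf : ∀ p, (Φ p).1 = (f p.1.1, f p.1.2)) : f.Injective := by
  intro x y hxy
  by_contra hne
  have hΦxy := (Φ ⟨(x, y), hne⟩).2
  rw [hf] at hΦxy
  exact hΦxy hxy

end Split

theorem exists_homeomorph_of_split [TopologicalSpace X] [T1Space X] [Nontrivial X]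
    (Φ : OffDiagonal X ≃ₜ OffDiagonal X)
    (h1 : ∀ p q : OffDiagonal X, p.1.1 = q.1.1 → (Φ p).1.1 = (Φ q).1.1)
    (h2 : ∀ p q : OffDiagonal X, p.1.2 = q.1.2 → (Φ p).1.2 = (Φ q).1.2) :
    ∃ φ : X ≃ₜ X, ∀ p, (Φ p).1 = (φ p.1.1, φ p.1.2) := by
  obtain ⟨f, hf⟩ := exists_eq_comp_fst (fun p => (Φ p).1.1) h1
  obtain ⟨g, hg⟩ := exists_eq_comp_snd (fun p => (Φ p).1.2) h2
  have hfg : ∀ p, (Φ p).1 = (f p.1.1, g p.1.2) := fun p => Prod.ext (hf p) (hg p)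
  rw [snd_eq_fst_of_surjective Φ.surjective hfg] at hfg
  let e := Equiv.ofBijective f
    ⟨injective_of_forall_val_eq hfg, surjective_fst_of_surjective Φ.surjective hfg⟩
  have he : ∀ p, (Φ.symm p).1.1 = e.symm p.1.1 := fun p =>
    e.eq_symm_apply.2 ((hf (Φ.symm p)).symm.trans (by rw [Φ.apply_symm_apply]))
  exact ⟨⟨e, continuous_of_eq_comp_fst (by fun_prop) hf,
    continuous_of_eq_comp_fst (by fun_prop) he⟩, hfg⟩

end OffDiagonal

theorem stmt3_general (Φ : SplitAnnulus ≃ₜ SplitAnnulus)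
    (h1 : ∀ p q : SplitAnnulus, p.val.1 = q.val.1 → (Φ p).val.1 = (Φ q).val.1)
    (h2 : ∀ p q : SplitAnnulus, p.val.2 = q.val.2 → (Φ p).val.2 = (Φ q).val.2) :
    ∃ φ : (Projectivization ℝ (Fin 2 → ℝ)) ≃ₜ (Projectivization ℝ (Fin 2 → ℝ)),
      ∀ p : SplitAnnulus, (Φ p).val = (φ p.val.1, φ p.val.2) :=
  OffDiagonal.exists_homeomorph_of_split Φ h1 h2

/-- Every split homeomorphism of the split annulus is of the form (x,y) ↦ (φ x, φ y)
for a homeomorphism φ of the projective line. -/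
theorem stmt3 (Φ : SplitAnnulus ≃ₜ SplitAnnulus)
    (h1 : ∀ p q : SplitAnnulus, p.val.1 = q.val.1 → (Φ p).val.1 = (Φ q).val.1)
    (h2 : ∀ p q : SplitAnnulus, p.val.2 = q.val.2 → (Φ p).val.2 = (Φ q).val.2)
    (h3 : ∀ p q : SplitAnnulus, p.val.1 = q.val.1 → (Φ.symm p).val.1 = (Φ.symm q).val.1)
    (h4 : ∀ p q : SplitAnnulus, p.val.2 = q.val.2 → (Φ.symm p).val.2 = (Φ.symm q).val.2) :
    ∃ φ : (Projectivization ℝ (Fin 2 → ℝ)) ≃ₜ (Projectivization ℝ (Fin 2 → ℝ)),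
      ∀ p : SplitAnnulus, (Φ p).val = (φ p.val.1, φ p.val.2) :=
  stmt3_general Φ h1 h2
end

section
/- Let φ : ℝ → ℝ be three times continuously differentiable with φ'(x) > 0 for all x, and suppose that for all x ≠ y one has (φ(x) - φ(y))² = φ'(x) · φ'(y) · (x - y)². Then φ is affine: there exist a, b ∈ ℝ with φ(x) = a·x + b for all x. -/
/-!
Since φ is strictly increasing, taking square roots in the hypothesis gives
φ x - φ y = g x · g y · (x - y) with g = √φ' > 0. Writing φ x - φ 1 as (φ x - φ 0) + (φ 0 - φ 1)
and dividing by g x · g 0 · g 1 shows that 1/g is affine, i.e. φ is a Möbius map. An affine function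
that is positive on all of ℝ is constant, so φ' is constant.
-/

lemma StrictMono.sub_mul_sub_pos {f : ℝ → ℝ} (hf : StrictMono f) {x y : ℝ} (hxy : x ≠ y) :
    0 < (f x - f y) * (x - y) := by
  rcases hxy.lt_or_gt with hlt | hlt
  · exact mul_pos_of_neg_of_neg (sub_neg.2 (hf hlt)) (sub_neg.2 hlt)
  · exact mul_pos (sub_pos.2 (hf hlt)) (sub_pos.2 hlt)

lemma StrictMono.sub_eq_sqrt_mul_sqrt_mul {f d : ℝ → ℝ} (hf : StrictMono f)
    (h : ∀ x y, x ≠ y → (f x - f y) ^ 2 = d x * d y * (x - y) ^ 2) (hd : ∀ x, 0 ≤ d x) (x y : ℝ) :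
    f x - f y = √(d x) * √(d y) * (x - y) := by
  rcases eq_or_ne x y with rfl | hxy
  · simp
  have hsq : (f x - f y) ^ 2 = (√(d x) * √(d y) * (x - y)) ^ 2 := by
    rw [h x y hxy, mul_pow, mul_pow, Real.sq_sqrt (hd x), Real.sq_sqrt (hd y)]
  rcases sq_eq_sq_iff_eq_or_eq_neg.1 hsq with heq | hneg
  · exact heq
  · have hpos := hf.sub_mul_sub_pos hxy
    have : 0 ≤ √(d x) * √(d y) * (x - y) ^ 2 := by positivity
    nlinarith

lemma inv_eq_of_sub_eq_mul_mul {f g : ℝ → ℝ} (hg : ∀ x, g x ≠ 0)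
    (hfg : ∀ x y, f x - f y = g x * g y * (x - y)) (x : ℝ) :
    (g x)⁻¹ = (1 - x) * (g 0)⁻¹ + x * (g 1)⁻¹ := by
  have hcocycle : g x * g 0 * (x - 0) + g 0 * g 1 * (0 - 1) = g x * g 1 * (x - 1) := by
    rw [← hfg, ← hfg, ← hfg]
    ring
  have := hg x
  have := hg 0
  have := hg 1
  field_simp
  linear_combination -hcocycle

lemma eq_zero_of_forall_mul_add_pos {a b : ℝ} (h : ∀ x, 0 < a * x + b) : a = 0 := by
  by_contra ha
  have := h (-(b + 1) / a)
  field_simp at this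
  linarith

theorem stmt4_general (φ : ℝ → ℝ) (hd : ∀ x : ℝ, 0 < deriv φ x)
    (h : ∀ x y : ℝ, x ≠ y → (φ x - φ y) ^ 2 = deriv φ x * deriv φ y * (x - y) ^ 2) :
    ∃ a b : ℝ, ∀ x : ℝ, φ x = a * x + b := by
  set g : ℝ → ℝ := fun x ↦ √(deriv φ x)
  have hg : ∀ x, 0 < g x := fun x ↦ Real.sqrt_pos.2 (hd x)
  have hφg : ∀ x y, φ x - φ y = g x * g y * (x - y) :=
    (strictMono_of_deriv_pos hd).sub_eq_sqrt_mul_sqrt_mul h fun x ↦ (hd x).le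
  have hinv := inv_eq_of_sub_eq_mul_mul (fun x ↦ (hg x).ne') hφg
  have hslope : (g 1)⁻¹ - (g 0)⁻¹ = 0 :=
    eq_zero_of_forall_mul_add_pos (b := (g 0)⁻¹) fun x ↦ by
      linarith [hinv x, inv_pos.2 (hg x)]
  have hconst : ∀ x, g x = g 0 := fun x ↦ inv_injective (by linear_combination hinv x + x * hslope)
  refine ⟨g 0 ^ 2, φ 0, fun x ↦ ?_⟩
  linear_combination hφg x 0 + g 0 * x * hconst x

/-- A C³ map φ with positive derivative satisfying
(φ(x)-φ(y))² = φ'(x)·φ'(y)·(x-y)² for all x ≠ y is affine. -/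
theorem stmt4 (φ : ℝ → ℝ) (hφ : ContDiff ℝ 3 φ) (hd : ∀ x : ℝ, 0 < deriv φ x)
    (h : ∀ x y : ℝ, x ≠ y → (φ x - φ y) ^ 2 = deriv φ x * deriv φ y * (x - y) ^ 2) :
    ∃ a b : ℝ, ∀ x : ℝ, φ x = a * x + b :=
  stmt4_general φ hd h
end

section
/- Let V be a 2-dimensional real vector space and ω a nonzero alternating bilinear form on V (a volume form). Let q be the symmetric bilinear form on V ⊗ V determined by q(u₁ ⊗ u₂, v₁ ⊗ v₂) = -ω(u₁, v₁) · ω(u₂, v₂). Then q has signature (2,2): there exists a basis (b₀, b₁, b₂, b₃) of V ⊗ V with q(b₀,b₀) = q(b₁,b₁) = 1, q(b₂,b₂) = q(b₃,b₃) = -1, and q(bᵢ, bⱼ) = 0 for i ≠ j. -/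
open TensorProduct

/-!
For a basis `e₀, e₁` of `V` put `c = ω(e₀, e₁)`, which is nonzero since `ω` is alternating and
nonzero. With respect to `q` the four tensors `e₀⊗e₁ + e₁⊗e₀`, `e₀⊗e₀ - e₁⊗e₁`, `e₀⊗e₀ + e₁⊗e₁`,
`e₀⊗e₁ - e₁⊗e₀` are pairwise orthogonal with squares `2c², 2c², -2c², -2c²`. Orthogonal vectors
of nonzero square are linearly independent, so these four form a basis of the 4-dimensional
`V ⊗ V`, and rescaling `e₀` so that `2c² = 1` makes it orthonormal of signature `(2, 2)`.
-/

theorem LinearMap.BilinForm.IsAlt.apply_basis_zero_one_ne_zero {R M : Type*} [CommRing R]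
    [AddCommGroup M] [Module R M] {ω : LinearMap.BilinForm R M} (hω : ω.IsAlt)
    (b : Module.Basis (Fin 2) R M) (hω₀ : ω ≠ 0) : ω (b 0) (b 1) ≠ 0 := by
  intro h
  have hvanish : ∀ i j, ω (b i) (b j) = 0 := by
    simp only [Fin.forall_fin_two]
    exact ⟨⟨hω.self_eq_zero _, h⟩, hω.eq_iff.mp h, hω.self_eq_zero _⟩
  exact hω₀ (b.ext fun i => b.ext fun j => hvanish i j)

section TensorFrame

variable {R V : Type*} [CommRing R] [AddCommGroup V] [Module R V]

def tensorFrame (e₀ e₁ : V) : Fin 4 → V ⊗[R] V :=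
  ![e₀ ⊗ₜ e₁ + e₁ ⊗ₜ e₀, e₀ ⊗ₜ e₀ - e₁ ⊗ₜ e₁, e₀ ⊗ₜ e₀ + e₁ ⊗ₜ e₁, e₀ ⊗ₜ e₁ - e₁ ⊗ₜ e₀]

variable {ω : LinearMap.BilinForm R V} (hω : ω.IsAlt) {q : LinearMap.BilinForm R (V ⊗[R] V)}
  (hq : ∀ u₁ u₂ v₁ v₂ : V, q (u₁ ⊗ₜ u₂) (v₁ ⊗ₜ v₂) = -(ω u₁ v₁ * ω u₂ v₂)) (e₀ e₁ : V)
include hω hq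

theorem isOrthoᵢ_tensorFrame : q.IsOrthoᵢ (tensorFrame e₀ e₁) := by
  rw [LinearMap.isOrthoᵢ_def]
  intro i j hij
  have h₁₀ := hω.neg_eq e₀ e₁
  fin_cases i <;> fin_cases j <;> first
    | exact absurd rfl hij
    | simp [tensorFrame, hq, hω.self_eq_zero, ← h₁₀]

theorem apply_tensorFrame_self (i : Fin 4) :
    q (tensorFrame e₀ e₁ i) (tensorFrame e₀ e₁ i) = ![1, 1, -1, -1] i * (2 * ω e₀ e₁ ^ 2) := by
  have h₁₀ := hω.neg_eq e₀ e₁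
  fin_cases i <;>
    simp only [tensorFrame, Fin.reduceFinMk, Fin.zero_eta, Fin.mk_one, Matrix.cons_val,
      Matrix.cons_val_zero, Matrix.cons_val_one, map_add, map_sub, LinearMap.add_apply,
      LinearMap.sub_apply, hq, hω.self_eq_zero, ← h₁₀] <;> ring

end TensorFrame

/-- The bilinear form -ω⊗ω on V ⊗ V, for a volume form ω on a 2-dimensional real
vector space V, has signature (2,2). -/
theorem stmt5 (V : Type*) [AddCommGroup V] [Module ℝ V]
    (bV : Module.Basis (Fin 2) ℝ V)
    (ω : LinearMap.BilinForm ℝ V) (hω : ω ≠ 0) (halt : ∀ v : V, ω v v = 0)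
    (q : LinearMap.BilinForm ℝ (V ⊗[ℝ] V))
    (hq : ∀ u₁ u₂ v₁ v₂ : V,
      q (u₁ ⊗ₜ[ℝ] u₂) (v₁ ⊗ₜ[ℝ] v₂) = -(ω u₁ v₁ * ω u₂ v₂)) :
    ∃ b : Module.Basis (Fin 4) ℝ (V ⊗[ℝ] V),
      q (b 0) (b 0) = 1 ∧ q (b 1) (b 1) = 1 ∧
      q (b 2) (b 2) = -1 ∧ q (b 3) (b 3) = -1 ∧
      ∀ i j : Fin 4, i ≠ j → q (b i) (b j) = 0 := by
  have : Module.Finite ℝ V := .of_basis bV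
  have hc : ω (bV 0) (bV 1) ≠ 0 :=
    LinearMap.BilinForm.IsAlt.apply_basis_zero_one_ne_zero halt bV hω
  set e₀ := (√2 * ω (bV 0) (bV 1))⁻¹ • bV 0
  have hnorm : 2 * ω e₀ (bV 1) ^ 2 = 1 := by
    simp only [e₀, map_smul, LinearMap.smul_apply, smul_eq_mul]
    field_simp
    norm_num
  have hdiag (i : Fin 4) :
      q (tensorFrame e₀ (bV 1) i) (tensorFrame e₀ (bV 1) i) = ![1, 1, -1, -1] i := by
    rw [apply_tensorFrame_self halt hq, hnorm, mul_one]
  have hortho := isOrthoᵢ_tensorFrame halt hq e₀ (bV 1)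
  have hindep := LinearMap.linearIndependent_of_isOrthoᵢ hortho
    (fun i => by rw [hdiag]; fin_cases i <;> norm_num)
  have hcard : Fintype.card (Fin 4) = Module.finrank ℝ (V ⊗[ℝ] V) := by
    simp [Module.finrank_tensorProduct, Module.finrank_eq_card_basis bV]
  refine ⟨basisOfLinearIndependentOfCardEqFinrank' _ hindep hcard, ?_⟩
  simpa only [coe_basisOfLinearIndependentOfCardEqFinrank'] using
    ⟨hdiag 0, hdiag 1, hdiag 2, hdiag 3, hortho⟩
end

section
/- Let W be a real vector space with a symmetric bilinear form ⟨·,·⟩, let U ⊆ ℝ² be open and connected, let σ : ℝ² → W and λ : ℝ² → ℝ be differentiable at every point of U with ⟨σ(s), σ(s)⟩ = 0 and λ(s) ≠ 0 for all s ∈ U. Suppose that for every s ∈ U there exist u, v ∈ ℝ² with ⟨Dσ(s)(u), Dσ(s)(v)⟩ ≠ 0, and that for all s ∈ U and all u, v ∈ ℝ²: ⟨D(λ·σ)(s)(u), D(λ·σ)(s)(v)⟩ = ⟨Dσ(s)(u), Dσ(s)(v)⟩. Then either λ(s) = 1 for all s ∈ U, or λ(s) = -1 for all s ∈ U. -/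
/-! Differentiating `⟨σ, σ⟩ = 0` gives `⟨σ, Dσ u⟩ = 0`, so in
`D(λσ) u = λ Dσ u + (Dλ u) σ` every term containing `σ` drops out of the first fundamental
form: `g_{λσ} = λ² g_σ`. Where `g_σ ≠ 0` this forces `λ² = 1`, and a continuous function with
values in `{1, -1}` on a connected set is constant. -/

open Filter Topology Set

section IsotropicRescaling

variable {E W : Type*} [NormedAddCommGroup E] [NormedSpace ℝ E]
  [NormedAddCommGroup W] [NormedSpace ℝ W]

theorem apply_fderiv_eq_zero_of_isotropic (B : W →L[ℝ] W →L[ℝ] ℝ)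
    (hsymm : ∀ a b : W, B a b = B b a) {σ : E → W} {s : E} (hσ : DifferentiableAt ℝ σ s)
    (hiso : ∀ᶠ t in 𝓝 s, B (σ t) (σ t) = 0) (u : E) :
    B (σ s) (fderiv ℝ σ s u) = 0 := by
  have hzero : (fun t => B (σ t) (σ t)) =ᶠ[𝓝 s] fun _ => (0 : ℝ) := hiso
  have hderiv := B.fderiv_of_bilinear hσ hσ
  rw [hzero.fderiv_eq, fderiv_fun_const] at hderiv
  have hu := congrArg (fun L : E →L[ℝ] ℝ => L u) hderiv
  simp only [Pi.zero_apply, zero_apply, add_apply, ContinuousLinearMap.precompR_apply,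
    ContinuousLinearMap.precompL_apply, ContinuousLinearMap.compL_apply,
    ContinuousLinearMap.comp_apply] at hu
  rw [hsymm (fderiv ℝ σ s u)] at hu
  linarith

theorem fundamentalForm_smul_of_isotropic (B : W →L[ℝ] W →L[ℝ] ℝ)
    (hsymm : ∀ a b : W, B a b = B b a) {σ : E → W} {l : E → ℝ} {s : E}
    (hσ : DifferentiableAt ℝ σ s) (hl : DifferentiableAt ℝ l s)
    (hiso : ∀ᶠ t in 𝓝 s, B (σ t) (σ t) = 0) (u v : E) :
    B (fderiv ℝ (fun t => l t • σ t) s u) (fderiv ℝ (fun t => l t • σ t) s v)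
      = l s ^ 2 * B (fderiv ℝ σ s u) (fderiv ℝ σ s v) := by
  have horth := apply_fderiv_eq_zero_of_isotropic B hsymm hσ hiso
  rw [fderiv_fun_smul hl hσ]
  simp only [add_apply, smul_apply, ContinuousLinearMap.smulRight_apply, map_add, map_smul,
    smul_eq_mul, hsymm (fderiv ℝ σ s u) (σ s), horth, hiso.self_of_nhds]
  ring

end IsotropicRescaling

theorem stmt9_general (W : Type*) [NormedAddCommGroup W] [NormedSpace ℝ W]
    (B : W →L[ℝ] W →L[ℝ] ℝ) (hsymm : ∀ a b : W, B a b = B b a)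
    (U : Set (ℝ × ℝ)) (hU : IsOpen U) (hconn : IsConnected U)
    (σ : ℝ × ℝ → W) (l : ℝ × ℝ → ℝ)
    (hσ : ∀ s ∈ U, DifferentiableAt ℝ σ s)
    (hl : ∀ s ∈ U, DifferentiableAt ℝ l s)
    (hiso : ∀ s ∈ U, B (σ s) (σ s) = 0)
    (hnd : ∀ s ∈ U, ∃ u v : ℝ × ℝ, B (fderiv ℝ σ s u) (fderiv ℝ σ s v) ≠ 0)
    (heq : ∀ s ∈ U, ∀ u v : ℝ × ℝ,
      B (fderiv ℝ (fun t => l t • σ t) s u) (fderiv ℝ (fun t => l t • σ t) s v)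
        = B (fderiv ℝ σ s u) (fderiv ℝ σ s v)) :
    (∀ s ∈ U, l s = 1) ∨ (∀ s ∈ U, l s = -1) := by
  have hsq : EqOn (l ^ 2) 1 U := fun s hs => by
    obtain ⟨u, v, huv⟩ := hnd s hs
    have hiso_near : ∀ᶠ t in 𝓝 s, B (σ t) (σ t) = 0 := eventually_of_mem (hU.mem_nhds hs) hiso
    have h := heq s hs u v
    rw [fundamentalForm_smul_of_isotropic B hsymm (hσ s hs) (hl s hs) hiso_near] at h
    exact mul_right_cancel₀ huv (h.trans (one_mul _).symm)
  have hcont : ContinuousOn l U := fun s hs => (hl s hs).continuousAt.continuousWithinAt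
  exact hconn.isPreconnected.eq_one_or_eq_neg_one_of_sq_eq hcont hsq

/-- Uniqueness up to sign: if rescaling an isotropic surface σ by a nonvanishing
differentiable factor λ preserves the first fundamental form at infinity (which is
somewhere nondegenerate), then λ ≡ 1 or λ ≡ -1 on a connected open set. -/
theorem stmt9 (W : Type*) [NormedAddCommGroup W] [NormedSpace ℝ W]
    (B : W →L[ℝ] W →L[ℝ] ℝ) (hsymm : ∀ a b : W, B a b = B b a)
    (U : Set (ℝ × ℝ)) (hU : IsOpen U) (hconn : IsConnected U)
    (σ : ℝ × ℝ → W) (l : ℝ × ℝ → ℝ)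
    (hσ : ∀ s ∈ U, DifferentiableAt ℝ σ s)
    (hl : ∀ s ∈ U, DifferentiableAt ℝ l s)
    (hiso : ∀ s ∈ U, B (σ s) (σ s) = 0)
    (hne : ∀ s ∈ U, l s ≠ 0)
    (hnd : ∀ s ∈ U, ∃ u v : ℝ × ℝ, B (fderiv ℝ σ s u) (fderiv ℝ σ s v) ≠ 0)
    (heq : ∀ s ∈ U, ∀ u v : ℝ × ℝ,
      B (fderiv ℝ (fun t => l t • σ t) s u) (fderiv ℝ (fun t => l t • σ t) s v)
        = B (fderiv ℝ σ s u) (fderiv ℝ σ s v)) :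
    (∀ s ∈ U, l s = 1) ∨ (∀ s ∈ U, l s = -1) :=
  stmt9_general W B hsymm U hU hconn σ l hσ hl hiso hnd heq
end

section
/- Let W be a real vector space with a symmetric bilinear form ⟨·,·⟩, U ⊆ ℝ² open, and σ, η : ℝ² → W differentiable at every point of U with, for all s ∈ U: ⟨σ(s),σ(s)⟩ = 0, ⟨η(s),η(s)⟩ = 0, ⟨σ(s),η(s)⟩ = 1, and ⟨Dσ(s)(u), η(s)⟩ = 0 for all u ∈ ℝ². Define p = (√2/2)·(σ - η). Then for all s ∈ U: ⟨σ(s), p(s)⟩ = -√2/2, and for all u ∈ ℝ²: ⟨Dp(s)(u), σ(s)⟩ = 0 and ⟨Dp(s)(u), η(s)⟩ = 0. -/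
/-!
Differentiating the constraints ⟨σ,σ⟩ = 0, ⟨η,η⟩ = 0 and ⟨σ,η⟩ = 1, which hold on the open set `U`,
and using the symmetry of the form gives ⟨Dσ u, σ⟩ = 0, ⟨Dη u, η⟩ = 0 and
⟨Dη u, σ⟩ = -⟨σ, Dη u⟩ = ⟨Dσ u, η⟩ = 0. Since Dp = (√2/2)(Dσ - Dη), both ⟨Dp u, σ⟩ and
⟨Dp u, η⟩ vanish, while ⟨σ, p⟩ = (√2/2)(⟨σ,σ⟩ - ⟨σ,η⟩) = -√2/2.
-/

namespace ContinuousLinearMap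

variable {𝕜 : Type*} [NontriviallyNormedField 𝕜]
  {E W G : Type*} [NormedAddCommGroup E] [NormedSpace 𝕜 E]
  [NormedAddCommGroup W] [NormedSpace 𝕜 W] [NormedAddCommGroup G] [NormedSpace 𝕜 G]

theorem apply_fderiv_add_fderiv_apply_eq_zero_of_eventually_const
    (B : W →L[𝕜] W →L[𝕜] G) {φ ψ : E → W} {s : E}
    (hφ : DifferentiableAt 𝕜 φ s) (hψ : DifferentiableAt 𝕜 ψ s)
    {c : G} (hc : ∀ᶠ t in nhds s, B (φ t) (ψ t) = c) (u : E) :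
    B (φ s) (fderiv 𝕜 ψ s u) + B (fderiv 𝕜 φ s u) (ψ s) = 0 := by
  have h : fderiv 𝕜 (fun t => B (φ t) (ψ t)) s = fderiv 𝕜 (fun _ => c) s :=
    Filter.EventuallyEq.fderiv_eq hc
  rw [fderiv_fun_const, B.fderiv_of_bilinear hφ hψ] at h
  simpa using DFunLike.congr_fun h u

variable (B : W →L[𝕜] W →L[𝕜] 𝕜) (hsymm : ∀ a b : W, B a b = B b a)
include hsymm

theorem fderiv_apply_self_eq_zero_of_eventually_const [CharZero 𝕜] {φ : E → W} {s : E}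
    (hφ : DifferentiableAt 𝕜 φ s) {c : 𝕜} (hc : ∀ᶠ t in nhds s, B (φ t) (φ t) = c) (u : E) :
    B (fderiv 𝕜 φ s u) (φ s) = 0 := by
  have h := B.apply_fderiv_add_fderiv_apply_eq_zero_of_eventually_const hφ hφ hc u
  rw [hsymm (φ s)] at h
  have h2 : (2 : 𝕜) * B (fderiv 𝕜 φ s u) (φ s) = 0 := by linear_combination h
  simpa using h2

theorem fderiv_apply_eq_neg_apply_fderiv_of_eventually_const {φ ψ : E → W} {s : E}
    (hφ : DifferentiableAt 𝕜 φ s) (hψ : DifferentiableAt 𝕜 ψ s)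
    {c : 𝕜} (hc : ∀ᶠ t in nhds s, B (φ t) (ψ t) = c) (u : E) :
    B (fderiv 𝕜 ψ s u) (φ s) = -B (fderiv 𝕜 φ s u) (ψ s) := by
  have h := B.apply_fderiv_add_fderiv_apply_eq_zero_of_eventually_const hφ hψ hc u
  rw [hsymm (φ s)] at h
  linear_combination h

end ContinuousLinearMap

/-- The Epstein map p = (√2/2)(σ - η) of an isotropic surface σ with dual η is an
envelope of the family of horospheres H(σ(s)): it satisfies ⟨σ, p⟩ = -√2/2 and its
derivative is orthogonal to both σ and η. -/
theorem stmt12 (W : Type*) [NormedAddCommGroup W] [NormedSpace ℝ W]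
    (B : W →L[ℝ] W →L[ℝ] ℝ) (hsymm : ∀ a b : W, B a b = B b a)
    (U : Set (ℝ × ℝ)) (hU : IsOpen U)
    (σ η : ℝ × ℝ → W)
    (hσ : ∀ s ∈ U, DifferentiableAt ℝ σ s) (hη : ∀ s ∈ U, DifferentiableAt ℝ η s)
    (hσσ : ∀ s ∈ U, B (σ s) (σ s) = 0)
    (hηη : ∀ s ∈ U, B (η s) (η s) = 0)
    (hση : ∀ s ∈ U, B (σ s) (η s) = 1)
    (hdual : ∀ s ∈ U, ∀ u : ℝ × ℝ, B (fderiv ℝ σ s u) (η s) = 0) :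
    ∀ s ∈ U,
      B (σ s) ((Real.sqrt 2 / 2) • (σ s - η s)) = -(Real.sqrt 2 / 2) ∧
      ∀ u : ℝ × ℝ,
        B (fderiv ℝ (fun t => (Real.sqrt 2 / 2) • (σ t - η t)) s u) (σ s) = 0 ∧
        B (fderiv ℝ (fun t => (Real.sqrt 2 / 2) • (σ t - η t)) s u) (η s) = 0 := by
  intro s hs
  have hU_nhds := hU.mem_nhds hs
  refine ⟨by simp [hσσ s hs, hση s hs], fun u => ?_⟩
  have hDσσ := B.fderiv_apply_self_eq_zero_of_eventually_const hsymm (hσ s hs)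
    (Filter.eventually_of_mem hU_nhds hσσ) u
  have hDηη := B.fderiv_apply_self_eq_zero_of_eventually_const hsymm (hη s hs)
    (Filter.eventually_of_mem hU_nhds hηη) u
  have hDησ := B.fderiv_apply_eq_neg_apply_fderiv_of_eventually_const hsymm (hσ s hs) (hη s hs)
    (Filter.eventually_of_mem hU_nhds hση) u
  rw [fderiv_fun_const_smul ((hσ s hs).fun_sub (hη s hs)), fderiv_fun_sub (hσ s hs) (hη s hs)]
  simp [hDσσ, hDηη, hDησ, hdual s hs u]
end

section
/- Let B be a symmetric bilinear form on ℝ⁴ and let x, n, u, e ∈ ℝ⁴ be pairwise B-orthogonal vectors with B(x,x) = -1, B(n,n) = 1, B(u,u) = 1, B(e,e) = -1, and suppose the determinant of the 4×4 matrix with columns x, n, u, e equals 1. Then for any vectors a, b ∈ ℝ⁴ with B(a, x) = 0, the determinant of the 4×4 matrix with columns a, n, u, b equals -B(a, e) · B(b, x). -/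
/-!
The frame splits `ℝ⁴` as `span {x, e} ⊕ span {n, u}`, and pairing with `x` and `e` reads off the
coefficients: `a = -B(a,x) x - B(a,e) e + (an element of span {n, u})`. With `n, u` in the middle
slots, the determinant is an alternating bilinear form in the two outer slots that kills
`span {n, u}`, so `det(a,n,u,b)` is the `2 × 2` determinant of the `x, e`-coefficients of `a` and
`b` times `det(x,n,u,e) = 1`.
-/

open Submodule

section
variable {R M N : Type*} [CommRing R] [AddCommGroup M] [Module R M] [AddCommGroup N] [Module R N]

theorem LinearMap.eq_zero_of_mem_span_pair {f : M →ₗ[R] N} {n u p : M} (hn : f n = 0) (hu : f u = 0)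
    (hp : p ∈ span R {n, u}) : f p = 0 := by
  obtain ⟨s, t, rfl⟩ := mem_span_pair.mp hp
  simp [hn, hu]

theorem exists_eq_smul_add_smul_add_of_sup_eq_top {x e n u : M}
    (h : span R {x, e} ⊔ span R {n, u} = ⊤) (v : M) :
    ∃ α β : R, ∃ p ∈ span R {n, u}, v = α • x + β • e + p := by
  obtain ⟨y, hy, p, hp, rfl⟩ := mem_sup.mp (h ▸ mem_top (x := v))
  obtain ⟨α, β, rfl⟩ := mem_span_pair.mp hy
  exact ⟨α, β, p, hp, rfl⟩

theorem LinearMap.BilinForm.apply_smul_add_smul_add (B : LinearMap.BilinForm R M)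
    {x e n u p g : M} (hn : B n g = 0) (hu : B u g = 0) (hp : p ∈ span R {n, u}) (α β : R) :
    B (α • x + β • e + p) g = α * B x g + β * B e g := by
  have hpg : B p g = 0 := LinearMap.eq_zero_of_mem_span_pair (f := B.flip g) hn hu hp
  simp [hpg]

namespace AlternatingMap

variable (D : M [⋀^Fin 4]→ₗ[R] N) (n u : M)

theorem map_vecCons_swap_zero_three (v w : M) : D ![v, n, u, w] = -D ![w, n, u, v] := by
  have h : ![w, n, u, v] ∘ Equiv.swap 0 3 = ![v, n, u, w] := by
    funext i; fin_cases i <;> rfl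
  rw [← h, D.map_swap _ (by decide)]

def outerSlots : M →ₗ[R] M →ₗ[R] N :=
  LinearMap.mk₂ R (fun v w => D ![v, n, u, w])
    (fun v₁ v₂ w => D.toMultilinearMap.cons_add _ v₁ v₂)
    (fun c v w => D.toMultilinearMap.cons_smul _ c v)
    (fun v w₁ w₂ => by
      simp only [map_vecCons_swap_zero_three D n u v]
      rw [← neg_add]
      exact congrArg Neg.neg (D.toMultilinearMap.cons_add _ w₁ w₂))
    (fun c v w => by
      simp only [map_vecCons_swap_zero_three D n u v]
      rw [smul_neg]
      exact congrArg Neg.neg (D.toMultilinearMap.cons_smul _ c w))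

theorem map_smul_add_smul_add_of_mem_span {x e p q : M} (hp : p ∈ span R {n, u})
    (hq : q ∈ span R {n, u}) (α β γ δ : R) :
    D ![α • x + β • e + p, n, u, γ • x + δ • e + q] = (α * δ - β * γ) • D ![x, n, u, e] := by
  set Φ := D.outerSlots n u
  have hΦp (w : M) : Φ p w = 0 := LinearMap.eq_zero_of_mem_span_pair (f := Φ.flip w)
    (D.map_eq_zero_of_eq _ (i := 0) (j := 1) rfl (by decide))
    (D.map_eq_zero_of_eq _ (i := 0) (j := 2) rfl (by decide)) hp
  have hΦq (v : M) : Φ v q = 0 := LinearMap.eq_zero_of_mem_span_pair (f := Φ v)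
    (D.map_eq_zero_of_eq _ (i := 1) (j := 3) rfl (by decide))
    (D.map_eq_zero_of_eq _ (i := 2) (j := 3) rfl (by decide)) hq
  have hΦxx : Φ x x = 0 := D.map_eq_zero_of_eq _ (i := 0) (j := 3) rfl (by decide)
  have hΦee : Φ e e = 0 := D.map_eq_zero_of_eq _ (i := 0) (j := 3) rfl (by decide)
  have hΦex : Φ e x = -Φ x e := map_vecCons_swap_zero_three D n u e x
  change Φ _ _ = (α * δ - β * γ) • Φ x e
  simp only [map_add, map_smul, LinearMap.add_apply, LinearMap.smul_apply, hΦp, hΦq, hΦxx, hΦee,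
    hΦex]
  module

end AlternatingMap
end

namespace Matrix

variable {m : ℕ}

theorem det_of_cols_eq_detRowAlternating {R : Type*} [CommRing R] (v : Fin m → Fin m → R) :
    (of fun i j => v j i).det = detRowAlternating v :=
  det_transpose (of v)

theorem span_range_eq_top_of_det_of_cols_ne_zero {K : Type*} [Field K] {v : Fin m → Fin m → K}
    (h : (of fun i j => v j i).det ≠ 0) : span K (Set.range v) = ⊤ :=
  (linearIndependent_cols_of_det_ne_zero h).span_eq_top_of_card_eq_finrank' (by simp)

end Matrix

theorem stmt13_general (B : LinearMap.BilinForm ℝ (Fin 4 → ℝ))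
    (hsymm : ∀ a b : Fin 4 → ℝ, B a b = B b a)
    (x n u e : Fin 4 → ℝ)
    (hxx : B x x = -1) (hee : B e e = -1)
    (hxn : B x n = 0) (hxu : B x u = 0) (hxe : B x e = 0)
    (hne : B n e = 0) (hue : B u e = 0)
    (hdet : (Matrix.of fun i j : Fin 4 => ![x, n, u, e] j i).det = 1) :
    ∀ a b : Fin 4 → ℝ, B a x = 0 →
      (Matrix.of fun i j : Fin 4 => ![a, n, u, b] j i).det = -(B a e * B b x) := by
  intro a b hax
  have hspan : span ℝ {x, e} ⊔ span ℝ {n, u} = ⊤ := by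
    rw [← span_union, ← Matrix.span_range_eq_top_of_det_of_cols_ne_zero (hdet ▸ one_ne_zero)]
    congr 1
    ext
    simp [Matrix.range_cons, or_comm, or_left_comm]
  have hnx : B n x = 0 := (hsymm n x).trans hxn
  have hux : B u x = 0 := (hsymm u x).trans hxu
  have hex : B e x = 0 := (hsymm e x).trans hxe
  have coeff_x (c d : ℝ) {r} (hr : r ∈ span ℝ {n, u}) : B (c • x + d • e + r) x = -c := by
    rw [B.apply_smul_add_smul_add hnx hux hr, hxx, hex]; ring
  have coeff_e (c d : ℝ) {r} (hr : r ∈ span ℝ {n, u}) : B (c • x + d • e + r) e = -d := by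
    rw [B.apply_smul_add_smul_add hne hue hr, hxe, hee]; ring
  obtain ⟨α, β, p, hp, rfl⟩ := exists_eq_smul_add_smul_add_of_sup_eq_top hspan a
  obtain ⟨γ, δ, q, hq, rfl⟩ := exists_eq_smul_add_smul_add_of_sup_eq_top hspan b
  rw [coeff_x α β hp, neg_eq_zero] at hax
  rw [coeff_e α β hp, coeff_x γ δ hq, Matrix.det_of_cols_eq_detRowAlternating,
    Matrix.detRowAlternating.map_smul_add_smul_add_of_mem_span n u hp hq,
    ← Matrix.det_of_cols_eq_detRowAlternating, hdet, hax, smul_eq_mul]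
  ring

/-- Determinant expansion against a pseudo-orthonormal frame (x,n,u,e) of signature
(2,2): if B(a,x) = 0 then det(a,n,u,b) = -B(a,e)·B(b,x). -/
theorem stmt13 (B : LinearMap.BilinForm ℝ (Fin 4 → ℝ))
    (hsymm : ∀ a b : Fin 4 → ℝ, B a b = B b a)
    (x n u e : Fin 4 → ℝ)
    (hxx : B x x = -1) (hnn : B n n = 1) (huu : B u u = 1) (hee : B e e = -1)
    (hxn : B x n = 0) (hxu : B x u = 0) (hxe : B x e = 0)
    (hnu : B n u = 0) (hne : B n e = 0) (hue : B u e = 0)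
    (hdet : (Matrix.of fun i j : Fin 4 => ![x, n, u, e] j i).det = 1) :
    ∀ a b : Fin 4 → ℝ, B a x = 0 →
      (Matrix.of fun i j : Fin 4 => ![a, n, u, b] j i).det = -(B a e * B b x) :=
  stmt13_general B hsymm x n u e hxx hee hxn hxu hxe hne hue hdet
end

section
/- Let φ : ℝ → ℝ be three times continuously differentiable and let x ∈ ℝ with φ'(x) ≠ 0. Set S = φ'''(x)/φ'(x) - (3/2)·(φ''(x)/φ'(x))². Then, as ε → 0 through nonzero values, (ε² · φ'(x) · φ'(x+ε)) / (φ(x) - φ(x+ε))² = 1 + (1/6)·S·ε² + o(ε²); that is, the function ε ↦ (ε²·φ'(x)·φ'(x+ε))/(φ(x)-φ(x+ε))² - 1 - (S/6)·ε² is o(ε²) along the punctured neighborhood filter at 0. -/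
open Asymptotics Filter
open scoped Topology

/-!
Write `a, b, c` for `φ', φ'', φ'''` at `x`, `F ε = (φ (x + ε) - φ x) / ε` and `G ε = φ' (x + ε)`,
so that for `ε ≠ 0` the quantity is `a G / F² - 1 - S ε² / 6`. Taylor's theorem gives
`F = P + o(ε²)` and `G = Q + o(ε²)` with `P = a + b ε / 2 + c ε² / 6`, `Q = a + b ε + c ε² / 2`,
and `F → a ≠ 0`. Hence `a G - (1 + S ε² / 6) F² = a Q - (1 + S ε² / 6) P² + o(ε²)`, and this
polynomial is `O(ε³)` because its `ε²`-coefficient `a c / 6 - b² / 4 - a² S / 6` vanishes: this is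
exactly how the Schwarzian enters.
-/

open Finset in
theorem taylor_isLittleO_add {E : Type*} [NormedAddCommGroup E] [NormedSpace ℝ E]
    {f : ℝ → E} {n : ℕ} (hf : ContDiff ℝ n f) (x : ℝ) :
    (fun ε : ℝ => f (x + ε) - ∑ k ∈ range (n + 1), ((k.factorial : ℝ)⁻¹ * ε ^ k) •
      iteratedDeriv k f x) =o[𝓝 0] fun ε => ε ^ n := by
  have hshift : Tendsto (fun ε : ℝ => x + ε) (𝓝 0) (𝓝 x) := by
    simpa using (continuous_const_add x).tendsto 0
  simpa [Function.comp_def, taylor_within_apply, iteratedDerivWithin_univ] using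
    (taylor_isLittleO_univ (x₀ := x) hf).comp_tendsto hshift

theorem isLittleO_slope_sub_taylor {φ : ℝ → ℝ} (hφ : ContDiff ℝ 3 φ) (x : ℝ) :
    (fun ε => (φ (x + ε) - φ x) / ε -
        (deriv φ x + iteratedDeriv 2 φ x / 2 * ε + iteratedDeriv 3 φ x / 6 * ε ^ 2))
      =o[𝓝[≠] 0] fun ε => ε ^ 2 := by
  have h := ((taylor_isLittleO_add hφ x).mono (nhdsWithin_le_nhds (s := {0}ᶜ))).mul_isBigO
    (isBigO_refl (fun ε : ℝ => ε⁻¹) _)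
  refine h.congr' ?_ ?_ <;> filter_upwards [self_mem_nhdsWithin] with ε (hε : ε ≠ 0)
  · simp only [Finset.sum_range_succ, Finset.sum_range_zero, Nat.factorial, iteratedDeriv_zero,
      iteratedDeriv_one, smul_eq_mul]
    field_simp
    ring
  · field_simp

theorem isLittleO_deriv_sub_taylor {φ : ℝ → ℝ} (hφ : ContDiff ℝ 3 φ) (x : ℝ) :
    (fun ε => deriv φ (x + ε) -
        (deriv φ x + iteratedDeriv 2 φ x * ε + iteratedDeriv 3 φ x / 2 * ε ^ 2))
      =o[𝓝 0] fun ε => ε ^ 2 := by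
  refine (taylor_isLittleO_add (ContDiff.deriv' (n := 2) hφ) x).congr (fun ε => ?_) fun _ => rfl
  simp only [Finset.sum_range_succ, Finset.sum_range_zero, Nat.factorial, iteratedDeriv_zero,
    smul_eq_mul]
  rw [← iteratedDeriv_succ', ← iteratedDeriv_succ']
  push_cast
  ring

theorem isLittleO_mul_div_sq_sub_schwarzian {l : Filter ℝ} (hl : l ≤ 𝓝 0) {a b c : ℝ}
    (ha : a ≠ 0) {F G : ℝ → ℝ}
    (hF : (fun ε => F ε - (a + b / 2 * ε + c / 6 * ε ^ 2)) =o[l] fun ε => ε ^ 2)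
    (hG : (fun ε => G ε - (a + b * ε + c / 2 * ε ^ 2)) =o[l] fun ε => ε ^ 2) :
    (fun ε => a * G ε / F ε ^ 2 - 1 - (c / a - 3 / 2 * (b / a) ^ 2) / 6 * ε ^ 2)
      =o[l] fun ε => ε ^ 2 := by
  set u := (c / a - 3 / 2 * (b / a) ^ 2) / 6
  set P : ℝ → ℝ := fun ε => a + b / 2 * ε + c / 6 * ε ^ 2
  -- `ε ^ 3 * R ε = a * (a + b * ε + c / 2 * ε ^ 2) - (1 + u * ε ^ 2) * P ε ^ 2`, by `hu`
  set R : ℝ → ℝ := fun ε => -(b * c / 6) - u * a * b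
    - (c ^ 2 / 36 + u * (b ^ 2 / 4 + a * c / 3)) * ε
    - u * b * c / 6 * ε ^ 2 - u * c ^ 2 / 36 * ε ^ 3
  have hu : u * a ^ 2 = a * c / 6 - b ^ 2 / 4 := by
    simp only [u]; field_simp; ring
  have hε : Tendsto (fun ε : ℝ => ε) l (𝓝 0) := tendsto_id.mono_left hl
  have hP : Tendsto P l (𝓝 a) := by
    simpa [P] using ((tendsto_const_nhds.add (hε.const_mul (b / 2))).add
      ((hε.pow 2).const_mul (c / 6)))
  have hFa : Tendsto F l (𝓝 a) := by
    simpa [P] using (hF.trans_tendsto (by simpa using hε.pow 2)).add hP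
  have hR : Tendsto (fun ε => ε * R ε) l (𝓝 0) := by
    have : Continuous fun ε => ε * R ε := by fun_prop
    simpa using (this.tendsto 0).mono_left hl
  have hnum : (fun ε => a * G ε - (1 + u * ε ^ 2) * F ε ^ 2) =o[l] fun ε => ε ^ 2 := by
    have hbdd : (fun ε => (1 + u * ε ^ 2) * (F ε + P ε)) =O[l] fun _ => (1 : ℝ) :=
      (((hε.pow 2).const_mul u).const_add 1 |>.mul (hFa.add hP)).isBigO_one ℝ
    have hcubic : (fun ε => ε ^ 2 * (ε * R ε)) =o[l] fun ε => ε ^ 2 := by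
      simpa using (isBigO_refl (fun ε : ℝ => ε ^ 2) l).mul_isLittleO ((isLittleO_one_iff ℝ).2 hR)
    have h := ((hG.const_mul_left a).sub (by simpa using hbdd.mul_isLittleO hF)).add hcubic
    refine h.congr_left fun ε => ?_
    simp only [P, R]
    linear_combination ε ^ 2 * hu
  have hinv : (fun ε => (F ε ^ 2)⁻¹) =O[l] fun _ => (1 : ℝ) :=
    ((hFa.pow 2).inv₀ (pow_ne_zero 2 ha)).isBigO_one ℝ
  refine (hnum.mul_isBigO hinv).congr' ?_ (by simp)
  filter_upwards [hFa.eventually_ne ha] with ε hε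
  field_simp
  ring

/-- Schwarzian expansion of the conformal factor:
ε²φ'(x)φ'(x+ε)/(φ(x)-φ(x+ε))² = 1 + S_φ(x)/6 · ε² + o(ε²) as ε → 0, ε ≠ 0. -/
theorem stmt14 (φ : ℝ → ℝ) (hφ : ContDiff ℝ 3 φ) (x : ℝ) (hd : deriv φ x ≠ 0) :
    (fun ε : ℝ =>
        ε ^ 2 * deriv φ x * deriv φ (x + ε) / (φ x - φ (x + ε)) ^ 2 - 1 -
          (iteratedDeriv 3 φ x / deriv φ x
            - 3 / 2 * (iteratedDeriv 2 φ x / deriv φ x) ^ 2) / 6 * ε ^ 2)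
      =o[𝓝[≠] (0 : ℝ)] fun ε => ε ^ 2 := by
  refine (isLittleO_mul_div_sq_sub_schwarzian nhdsWithin_le_nhds hd
    (isLittleO_slope_sub_taylor hφ x)
    ((isLittleO_deriv_sub_taylor hφ x).mono nhdsWithin_le_nhds)).congr' ?_ .rfl
  filter_upwards with ε
  rw [div_pow, div_div_eq_mul_div, sub_sq_comm (φ x)]
  ring
end
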